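/- arXiv:1108.1989 — 2 statements merged into one kernel-verified Lean document; each statement's English description precedes it below -/
import Mathlib

section
/- Let $P \in \mathbb{R}^{n\times n}$ be symmetric positive definite, let $\Lambda$ be the diagonal matrix with the same diagonal as $P$, let $\Omega = P - \Lambda$, and let $\bar\Omega$ be the diagonal matrix with $\bar\Omega_{ii} = \sum_j |\Omega_{ij}|$. Then for any $\alpha > 1/2$, the matrix $\Lambda + 2\alpha\bar\Omega - \Omega$ is positive definite (assuming all diagonal entries of $P$ are positive, which holds since $P$ is positive definite). -/
/-!
Row `k` of `Λ + 2αΩ̄ - Ω` has diagonal entry `P k k + 2α ∑ⱼ |Ω k j|` (as `Ω k k = 0`) and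
off-diagonal entries of absolute sum `∑ⱼ |Ω k j|`, so for `2α > 1` and `P k k > 0` the matrix is
strictly diagonally dominant. It is symmetric, so by Gershgorin's theorem its (real) eigenvalues
lie in discs centred at the positive diagonal entries that avoid `0`, hence are positive.
-/

open Finset Matrix

theorem Matrix.IsHermitian.posDef_of_sum_row_lt_diag {n : Type*} [Fintype n] [DecidableEq n]
    {A : Matrix n n ℝ} (hA : A.IsHermitian) (h : ∀ k, ∑ j ∈ univ.erase k, |A k j| < A k k) :
    A.PosDef := by
  refine hA.posDef_iff_eigenvalues_pos.mpr fun i => ?_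
  have hμ : Module.End.HasEigenvalue A.toLin' (hA.eigenvalues i) :=
    Module.End.hasEigenvalue_iff_mem_spectrum.mpr
      (spectrum_toLin' A ▸ hA.eigenvalues_mem_spectrum_real i)
  obtain ⟨k, hk⟩ := eigenvalue_mem_ball hμ
  rw [Metric.mem_closedBall, Real.dist_eq] at hk
  simp only [Real.norm_eq_abs] at hk
  linarith [h k, neg_abs_le (hA.eigenvalues i - A k k)]

theorem Matrix.posDef_diagonal_add_smul_diagonal_sum_abs_sub {n : Type*} [Fintype n]
    [DecidableEq n] {Ω : Matrix n n ℝ} (hΩ : Ω.IsHermitian) (hΩ_diag : ∀ i, Ω i i = 0)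
    {d : n → ℝ} (hd : ∀ i, 0 < d i) {c : ℝ} (hc : 1 < c) :
    (diagonal d + c • diagonal (fun i => ∑ j, |Ω i j|) - Ω).PosDef := by
  have hherm : (diagonal d + c • diagonal (fun i => ∑ j, |Ω i j|) - Ω).IsHermitian :=
    ((isHermitian_diagonal d).add ((isHermitian_diagonal _).smul (IsSelfAdjoint.all c))).sub hΩ
  refine hherm.posDef_of_sum_row_lt_diag fun k => ?_
  have hrow : ∑ j ∈ univ.erase k, |Ω k j| = ∑ j, |Ω k j| := by
    rw [sum_erase _ (by simp [hΩ_diag])]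
  have hoff : ∀ j ∈ univ.erase k,
      |(diagonal d + c • diagonal (fun i => ∑ j, |Ω i j|) - Ω) k j| = |Ω k j| := by
    intro j hj
    simp [diagonal_apply_ne _ (ne_of_mem_erase hj).symm]
  have hscale : ∑ j, |Ω k j| ≤ c * ∑ j, |Ω k j| :=
    le_mul_of_one_le_left (sum_nonneg fun j _ => abs_nonneg _) hc.le
  rw [sum_congr rfl hoff, hrow]
  simp only [sub_apply, add_apply, smul_apply, diagonal_apply_eq, hΩ_diag, smul_eq_mul]
  linarith [hd k]

theorem stmt_5 (n : ℕ) (P : Matrix (Fin n) (Fin n) ℝ) (hP : P.PosDef)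
    (Λ Ω Ωb : Matrix (Fin n) (Fin n) ℝ)
    (hΛ : Λ = Matrix.diagonal (fun i => P i i))
    (hΩ : Ω = P - Λ)
    (hΩb : Ωb = Matrix.diagonal (fun i => ∑ j, |Ω i j|))
    (α : ℝ) (hα : 1 / 2 < α) :
    (Λ + (2 * α) • Ωb - Ω).PosDef := by
  have hΩ_herm : Ω.IsHermitian := hΩ ▸ hΛ ▸ hP.isHermitian.sub (isHermitian_diagonal _)
  have hΩ_diag : ∀ i, Ω i i = 0 := fun i => by simp [hΩ, hΛ]
  subst hΛ hΩb
  exact posDef_diagonal_add_smul_diagonal_sum_abs_sub hΩ_herm hΩ_diag (fun _ => hP.diag_pos)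
    (by linarith)
end

section
/- Let $P \in \mathbb{R}^{n\times n}$ be symmetric positive definite, $\Lambda$ the diagonal of $P$, $\Omega = P - \Lambda$, and $\bar\Omega$ the diagonal matrix with $\bar\Omega_{ii} = \sum_j |\Omega_{ij}|$. For any $\alpha > 1/2$ and any vector $d$, the sequence generated by $w^{k+1} = (\Lambda + \alpha\bar\Omega)^{-1}(\alpha\bar\Omega - \Omega) w^k + (\Lambda + \alpha\bar\Omega)^{-1} d$ converges, for any initial vector $w^0$, to the unique solution of $P w = d$. -/
/-!
Write the iteration as the splitting `P = A - B` with `A = Λ + αΩ̄` and `B = αΩ̄ - Ω`, so that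
`A w_{k+1} = B w_k + d`. Besides `A - B = P`, also `A + B = Λ + (Ω̄ - Ω) + (2α - 1)Ω̄` is positive
definite, because `Ω̄ - Ω` is diagonally dominant with nonnegative diagonal. For such a splitting
the energy `xᵀAx` strictly decreases along the error iteration `e ↦ A⁻¹Be`: if `Ay = Bx` then
`2(xᵀAx - yᵀAy) = (x - y)ᵀ(A + B)(x - y) + (x + y)ᵀ(A - B)(x + y)`. By homogeneity and compactness
of the unit sphere the decrease is by a uniform factor `c < 1`, so the error tends to zero.
-/

open Filter Topology
open scoped Matrix

theorem exists_le_mul_of_homogeneous {E : Type*} [NormedAddCommGroup E] [NormedSpace ℝ E]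
    [FiniteDimensional ℝ E] {f g : E → ℝ} (hf : Continuous f) (hg : Continuous g)
    (hf_smul : ∀ (c : ℝ) x, f (c • x) = c ^ 2 * f x)
    (hg_smul : ∀ (c : ℝ) x, g (c • x) = c ^ 2 * g x)
    (hg_pos : ∀ x ≠ 0, 0 < g x) :
    ∃ c, 0 ≤ c ∧ (∀ x, f x ≤ c * g x) ∧ ((∀ x ≠ 0, f x < g x) → c < 1) := by
  have zero_of_smul {h : E → ℝ} (hh : ∀ (c : ℝ) x, h (c • x) = c ^ 2 * h x) : h 0 = 0 := by
    simpa using hh 0 0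
  rcases subsingleton_or_nontrivial E with hE | hE
  · refine ⟨0, le_rfl, fun x => ?_, fun _ => zero_lt_one⟩
    rw [Subsingleton.elim x 0, zero_of_smul hf_smul, zero_mul]
  have hS : IsCompact (Metric.sphere (0 : E) 1) := isCompact_sphere 0 1
  have hne : (Metric.sphere (0 : E) 1).Nonempty := NormedSpace.sphere_nonempty.mpr zero_le_one
  have hgS : ∀ u ∈ Metric.sphere (0 : E) 1, 0 < g u := fun u hu =>
    hg_pos u (ne_zero_of_mem_unit_sphere ⟨u, hu⟩)
  obtain ⟨u, hu, hmax⟩ := hS.exists_isMaxOn hne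
    (hf.continuousOn.div hg.continuousOn fun v hv => (hgS v hv).ne')
  refine ⟨max (f u / g u) 0, le_max_right _ _, fun x => ?_, fun hlt => ?_⟩
  · rcases eq_or_ne x 0 with rfl | hx
    · rw [zero_of_smul hf_smul, zero_of_smul hg_smul, mul_zero]
    have hxn : ‖x‖ ≠ 0 := norm_ne_zero_iff.mpr hx
    set v := ‖x‖⁻¹ • x
    have hv : v ∈ Metric.sphere (0 : E) 1 := by simp [v, norm_smul, hxn]
    have hratio : f v ≤ max (f u / g u) 0 * g v :=
      (div_le_iff₀ (hgS v hv)).mp ((hmax hv).trans (le_max_left _ _))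
    have hxv : x = ‖x‖ • v := by simp [v, smul_smul, hxn]
    rw [hxv, hf_smul, hg_smul]
    nlinarith [sq_nonneg ‖x‖]
  · exact max_lt ((div_lt_one (hgS u hu)).mpr (hlt u (ne_zero_of_mem_unit_sphere ⟨u, hu⟩)))
      zero_lt_one

theorem tendsto_pow_apply_zero_of_lyapunov {E : Type*} [NormedAddCommGroup E] [NormedSpace ℝ E]
    [FiniteDimensional ℝ E] (T : E →ₗ[ℝ] E) {V : E → ℝ} (hV : Continuous V)
    (hV_smul : ∀ (c : ℝ) x, V (c • x) = c ^ 2 * V x) (hV_pos : ∀ x ≠ 0, 0 < V x)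
    (hV_lt : ∀ x ≠ 0, V (T x) < V x) (x : E) :
    Tendsto (fun k => (T ^ k) x) atTop (𝓝 0) := by
  obtain ⟨c, hc₀, hc, hc_lt⟩ := exists_le_mul_of_homogeneous
    (hV.comp T.continuous_of_finiteDimensional) hV (fun c y => by simp [hV_smul]) hV_smul hV_pos
  obtain ⟨C, hC₀, hC, -⟩ := exists_le_mul_of_homogeneous (f := fun y => ‖y‖ ^ 2) (by fun_prop) hV
    (fun c y => by simp [norm_smul, mul_pow]) hV_smul hV_pos
  have hdecay : ∀ k, V ((T ^ k) x) ≤ c ^ k * V x := by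
    intro k
    induction k with
    | zero => simp
    | succ k ih =>
      calc V ((T ^ (k + 1)) x) = V (T ((T ^ k) x)) := by rw [pow_succ', Module.End.mul_apply]
        _ ≤ c * V ((T ^ k) x) := hc _
        _ ≤ c * (c ^ k * V x) := mul_le_mul_of_nonneg_left ih hc₀
        _ = c ^ (k + 1) * V x := by ring
  have hgeom : Tendsto (fun k => C * (c ^ k * V x)) atTop (𝓝 0) := by
    simpa using
      ((tendsto_pow_atTop_nhds_zero_of_lt_one hc₀ (hc_lt hV_lt)).mul_const (V x)).const_mul C
  have hsq : Tendsto (fun k => ‖(T ^ k) x‖ ^ 2) atTop (𝓝 0) :=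
    squeeze_zero (fun k => by positivity)
      (fun k => (hC _).trans (mul_le_mul_of_nonneg_left (hdecay k) hC₀)) hgeom
  rw [tendsto_zero_iff_norm_tendsto_zero]
  simpa [Real.sqrt_sq (norm_nonneg _)] using hsq.sqrt

namespace Matrix

variable {ι : Type*}

theorem PosDef.of_add_of_sub {A B : Matrix ι ι ℝ} (hAB : (A + B).PosDef)
    (hAB' : (A - B).PosDef) : A.PosDef := by
  convert (hAB.add hAB').smul (show (0 : ℝ) < 1 / 2 by norm_num) using 1
  module

variable [Fintype ι]

theorem IsSymm.dotProduct_mulVec_comm {R : Type*} [CommSemiring R] {A : Matrix ι ι R}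
    (hA : A.IsSymm) (x y : ι → R) : x ⬝ᵥ A *ᵥ y = y ⬝ᵥ A *ᵥ x := by
  rw [dotProduct_mulVec, ← mulVec_transpose, hA.eq, dotProduct_comm]

theorem two_mul_sub_dotProduct_mulVec_eq {R : Type*} [CommRing R] {A B : Matrix ι ι R}
    (hA : A.IsSymm) (hB : B.IsSymm) {x y : ι → R} (hxy : A *ᵥ y = B *ᵥ x) :
    2 * (x ⬝ᵥ A *ᵥ x - y ⬝ᵥ A *ᵥ y) =
      (x - y) ⬝ᵥ (A + B) *ᵥ (x - y) + (x + y) ⬝ᵥ (A - B) *ᵥ (x + y) := by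
  have hyBx : y ⬝ᵥ B *ᵥ x = y ⬝ᵥ A *ᵥ y := by rw [hxy]
  simp only [add_mulVec, sub_mulVec, mulVec_add, mulVec_sub, dotProduct_add, dotProduct_sub,
    add_dotProduct, sub_dotProduct, hA.dotProduct_mulVec_comm x y,
    hB.dotProduct_mulVec_comm x y, hyBx]
  ring

theorem dotProduct_mulVec_lt_of_mulVec_eq {A B : Matrix ι ι ℝ} (hAB : (A + B).PosDef)
    (hAB' : (A - B).PosDef) {x y : ι → ℝ} (hxy : A *ᵥ y = B *ᵥ x) (hx : x ≠ 0) :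
    y ⬝ᵥ A *ᵥ y < x ⬝ᵥ A *ᵥ x := by
  have hA : A.IsSymm := isHermitian_iff_isSymm.mp (hAB.of_add_of_sub hAB').isHermitian
  have hB : B.IsSymm := by
    simpa using hA.sub (isHermitian_iff_isSymm.mp hAB'.isHermitian)
  have h₁ := hAB.posSemidef.dotProduct_mulVec_nonneg (x - y)
  have h₂ := hAB'.posSemidef.dotProduct_mulVec_nonneg (x + y)
  simp only [star_trivial] at h₁ h₂
  have hsum : 0 < (x - y) ⬝ᵥ (A + B) *ᵥ (x - y) + (x + y) ⬝ᵥ (A - B) *ᵥ (x + y) := by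
    by_cases hxy' : x - y = 0
    · have : x + y ≠ 0 := by
        rw [← sub_eq_zero.mp hxy']
        exact fun h => hx (funext fun i => by simpa using congrFun h i)
      exact add_pos_of_nonneg_of_pos h₁ (hAB'.dotProduct_mulVec_pos this)
    · exact add_pos_of_pos_of_nonneg (hAB.dotProduct_mulVec_pos hxy') h₂
  linarith [two_mul_sub_dotProduct_mulVec_eq hA hB hxy]

theorem tendsto_splitting_iterate [DecidableEq ι] {A B : Matrix ι ι ℝ} (hAB : (A + B).PosDef)
    (hAB' : (A - B).PosDef) (d : ι → ℝ) {w : ℕ → ι → ℝ}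
    (hw : ∀ k, A *ᵥ w (k + 1) = B *ᵥ w k + d) :
    Tendsto w atTop (𝓝 ((A - B)⁻¹ *ᵥ d)) := by
  set x := (A - B)⁻¹ *ᵥ d
  have hA := hAB.of_add_of_sub hAB'
  have hx : A *ᵥ x = B *ᵥ x + d := by
    rw [← sub_eq_iff_eq_add', ← sub_mulVec, mulVec_mulVec,
      mul_nonsing_inv _ ((isUnit_iff_isUnit_det _).mp hAB'.isUnit), one_mulVec]
  set T := toLin' (A⁻¹ * B)
  have hT : ∀ y, A *ᵥ T y = B *ᵥ y := fun y => by
    rw [toLin'_apply, mulVec_mulVec, ← Matrix.mul_assoc,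
      mul_nonsing_inv _ ((isUnit_iff_isUnit_det _).mp hA.isUnit), Matrix.one_mul]
  have herr : ∀ k, w k - x = (T ^ k) (w 0 - x) := by
    intro k
    induction k with
    | zero => simp
    | succ k ih =>
      rw [pow_succ', Module.End.mul_apply, ← ih]
      refine mulVec_injective_iff_isUnit.mpr hA.isUnit ?_
      simp only [mulVec_sub, hT, hw, hx]
      abel
  have hV_pos : ∀ y ≠ 0, 0 < y ⬝ᵥ A *ᵥ y := fun y hy => by
    simpa using hA.dotProduct_mulVec_pos hy
  have hlim := tendsto_pow_apply_zero_of_lyapunov T (V := fun y => y ⬝ᵥ A *ᵥ y)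
    (by fun_prop) (fun c y => by simp [mulVec_smul, smul_dotProduct]; ring) hV_pos
    (fun y hy => dotProduct_mulVec_lt_of_mulVec_eq hAB hAB' (hT y) hy) (w 0 - x)
  simpa [← herr] using hlim.add_const x

theorem IsSymm.posSemidef_diagonal_sum_abs_sub [DecidableEq ι] {S : Matrix ι ι ℝ}
    (hS : S.IsSymm) : (diagonal (fun i => ∑ j, |S i j|) - S).PosSemidef := by
  refine PosSemidef.of_dotProduct_mulVec_nonneg
    (isHermitian_iff_isSymm.mpr ((isSymm_diagonal _).sub hS)) fun x => ?_
  have hdiag : x ⬝ᵥ diagonal (fun i => ∑ j, |S i j|) *ᵥ x = ∑ i, ∑ j, |S i j| * (x i * x i) := by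
    simp only [dotProduct, mulVec_diagonal, Finset.sum_mul, Finset.mul_sum]
    exact Finset.sum_congr rfl fun i _ => Finset.sum_congr rfl fun j _ => by ring
  have hcol : ∑ i, ∑ j, |S i j| * (x i * x i) = ∑ i, ∑ j, |S i j| * (x j * x j) := by
    rw [Finset.sum_comm]
    simp only [hS.apply]
  have hquad : x ⬝ᵥ S *ᵥ x = ∑ i, ∑ j, x i * (S i j * x j) := by
    simp only [dotProduct, mulVec, Finset.mul_sum]
  have hsum : 2 * (x ⬝ᵥ (diagonal (fun i => ∑ j, |S i j|) - S) *ᵥ x) =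
      ∑ i, ∑ j, (|S i j| * (x i * x i + x j * x j) - 2 * (x i * (S i j * x j))) := by
    simp only [sub_mulVec, dotProduct_sub, hdiag, hquad, mul_add, Finset.sum_sub_distrib,
      Finset.sum_add_distrib, ← Finset.mul_sum]
    linarith
  have hterm : ∀ i j, 0 ≤ |S i j| * (x i * x i + x j * x j) - 2 * (x i * (S i j * x j)) :=
    fun i j => by
      have hprod : x i * (S i j * x j) ≤ |S i j| * (|x i| * |x j|) :=
        (le_abs_self _).trans_eq (by rw [abs_mul, abs_mul]; ring)
      have hsq : |S i j| * (x i * x i + x j * x j) - 2 * (|S i j| * (|x i| * |x j|)) =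
          |S i j| * (|x i| - |x j|) ^ 2 := by
        rw [← abs_mul_abs_self (x i), ← abs_mul_abs_self (x j)]; ring
      nlinarith [mul_nonneg (abs_nonneg (S i j)) (sq_nonneg (|x i| - |x j|))]
  simpa using (show 0 ≤ 2 * (x ⬝ᵥ (diagonal (fun i => ∑ j, |S i j|) - S) *ᵥ x) from
    hsum ▸ Finset.sum_nonneg fun i _ => Finset.sum_nonneg fun j _ => hterm i j)

end Matrix

theorem stmt_6 (n : ℕ) (P : Matrix (Fin n) (Fin n) ℝ) (hP : P.PosDef)
    (Λ Ω Ωb : Matrix (Fin n) (Fin n) ℝ)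
    (hΛ : Λ = Matrix.diagonal (fun i => P i i))
    (hΩ : Ω = P - Λ)
    (hΩb : Ωb = Matrix.diagonal (fun i => ∑ j, |Ω i j|))
    (α : ℝ) (hα : 1 / 2 < α)
    (d : Fin n → ℝ) (w : ℕ → Fin n → ℝ)
    (hw : ∀ k, w (k + 1) =
      (Λ + α • Ωb)⁻¹ *ᵥ ((α • Ωb - Ω) *ᵥ w k) + (Λ + α • Ωb)⁻¹ *ᵥ d) :
    Filter.Tendsto w Filter.atTop (nhds (P⁻¹ *ᵥ d)) := by
  have hΛ_pos : Λ.PosDef := hΛ ▸ Matrix.PosDef.diagonal fun _ => hP.diag_pos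
  have hΩ_symm : Ω.IsSymm :=
    hΩ ▸ (Matrix.isHermitian_iff_isSymm.mp hP.isHermitian).sub (hΛ ▸ Matrix.isSymm_diagonal _)
  have hΩb_nonneg : Ωb.PosSemidef :=
    hΩb ▸ Matrix.PosSemidef.diagonal fun _ => Finset.sum_nonneg fun _ _ => abs_nonneg _
  have hsub : Λ + α • Ωb - (α • Ωb - Ω) = P := by rw [hΩ]; abel
  have hadd : (Λ + α • Ωb + (α • Ωb - Ω)).PosDef := by
    rw [show Λ + α • Ωb + (α • Ωb - Ω) = Λ + (Ωb - Ω) + (2 * α - 1) • Ωb by module]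
    exact (hΛ_pos.add_posSemidef (hΩb ▸ hΩ_symm.posSemidef_diagonal_sum_abs_sub)).add_posSemidef
      (hΩb_nonneg.smul (by linarith))
  have hA : IsUnit (Λ + α • Ωb).det :=
    (Matrix.isUnit_iff_isUnit_det _).mp (hadd.of_add_of_sub (hsub ▸ hP)).isUnit
  refine hsub ▸ Matrix.tendsto_splitting_iterate hadd (hsub ▸ hP) d fun k => ?_
  simp only [hw k, Matrix.mulVec_add, Matrix.mulVec_mulVec, ← Matrix.mul_assoc,
    Matrix.mul_nonsing_inv _ hA, Matrix.one_mul, Matrix.one_mulVec]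
end
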